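/- arXiv:2202.09119 — 2 statements merged into one kernel-verified Lean document; each statement's English description precedes it below -/
import Mathlib

section
/- Suppose c/R ≥ Σ_x (x/(n_k² + n_k·x)) · P(x) holds for a positive integer n_k. Then for any nonnegative integer x_{k+1}, setting n_{k+1} = n_k + x_{k+1}, the inequality c/R ≥ Σ_x (x/(n_{k+1}² + n_{k+1}·x)) · P(x) also holds. In other words, the one-step look-ahead release condition is monotone: once satisfied it remains satisfied after any further arrivals. -/
/-- Monotonicity of the one-step look-ahead release condition. -/
theorem stmt_3 (P : ℕ → ℝ) (hP : ∀ x, 0 ≤ P x) (hPsum : Summable P)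
    (R c : ℝ) (hR : 0 < R) (hc : 0 < c)
    (hsum : ∀ n : ℕ, 0 < n →
      Summable (fun x : ℕ => ((x : ℝ) / ((n : ℝ)^2 + n * x)) * P x))
    (nk : ℕ) (hnk : 0 < nk)
    (hcond : c / R ≥ ∑' x : ℕ, ((x : ℝ) / ((nk : ℝ)^2 + nk * x)) * P x)
    (xk1 : ℕ) :
    c / R ≥ ∑' x : ℕ,
      ((x : ℝ) / (((nk + xk1 : ℕ) : ℝ)^2 + (nk + xk1 : ℕ) * x)) * P x := by
  have hm : 0 < nk + xk1 := by omega
  refine le_trans (Summable.tsum_le_tsum (fun x => ?_) (hsum _ hm) (hsum _ hnk)) hcond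
  have h1 : (0:ℝ) < (nk:ℝ)^2 + nk * x := by positivity
  have h2 : (nk:ℝ) ≤ ((nk + xk1 : ℕ) : ℝ) := by push_cast; linarith [Nat.cast_nonneg (α := ℝ) xk1]
  gcongr
  exact hP x
end

section
/- Consider the finite-horizon monotone stopping problem: at each time k ∈ {0,...,J}, given the realized nondecreasing count sequence (n_k), the one-step look-ahead rule stops at τ = min{k : y_k(n_k) ≥ E[y_{k+1}(n_k + X)]} ∧ J, where y_k(n) = R(n-1)/n - ck and X ~ P. Show that once the stopping inequality y_k(n_k) ≥ E[y_{k+1}(n_k + X)] holds at time k, it holds at time k+1 for every realization n_{k+1} = n_k + x, x ∈ ℕ (the problem is monotone in the sense of one-step look-ahead stopping rules). -/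
/-- The stopping problem is monotone: once the one-step look-ahead inequality
holds, it holds at the next step for every realization of arrivals. -/
theorem stmt_16 (P : ℕ → ℝ) (hP : ∀ x, 0 ≤ P x) (hPsum : Summable P)
    (hP1 : ∑' x, P x = 1) (R c : ℝ) (hR : 0 < R) (hc : 0 < c)
    (y : ℕ → ℕ → ℝ) (hy : ∀ k n, y k n = R * (((n : ℝ) - 1) / n) - c * k)
    (hsum : ∀ n : ℕ, 0 < n →
      Summable (fun x : ℕ => ((x : ℝ) / ((n : ℝ)^2 + n * x)) * P x))
    (hEsum : ∀ (k : ℕ) (n : ℕ), 0 < n →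
      Summable (fun x : ℕ => y k (n + x) * P x))
    (k : ℕ) (nk : ℕ) (hnk : 0 < nk)
    (hstop : y k nk ≥ ∑' x : ℕ, y (k + 1) (nk + x) * P x) :
    ∀ x' : ℕ,
      y (k + 1) (nk + x') ≥ ∑' x : ℕ, y (k + 2) (nk + x' + x) * P x := by
  intro x'
  have hn' : 0 < nk + x' := Nat.lt_of_lt_of_le hnk (Nat.le_add_right _ _)
  -- key identity: expected value at step j starting from m
  have key : ∀ (j m : ℕ), 0 < m →
      ∑' x : ℕ, y j (m + x) * P x
        = y j m + R * ∑' x : ℕ, ((x : ℝ) / ((m : ℝ)^2 + m * x)) * P x := by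
    intro j m hm
    have hm0 : (0:ℝ) < (m:ℝ) := by exact_mod_cast hm
    have hpt : ∀ x : ℕ, y j (m + x) * P x
        = y j m * P x + R * (((x : ℝ) / ((m : ℝ)^2 + m * x)) * P x) := by
      intro x
      have hmx : ((m:ℝ) + x) ≠ 0 := by positivity
      have hden : ((m:ℝ)^2 + m * x) ≠ 0 := by positivity
      rw [hy, hy]
      push_cast
      field_simp
      ring
    calc ∑' x : ℕ, y j (m + x) * P x
        = ∑' x : ℕ, (y j m * P x + R * (((x:ℝ)/((m:ℝ)^2 + m*x)) * P x)) :=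
          tsum_congr hpt
      _ = (∑' x : ℕ, y j m * P x)
            + ∑' x : ℕ, R * (((x:ℝ)/((m:ℝ)^2 + m*x)) * P x) :=
          Summable.tsum_add (hPsum.mul_left _) ((hsum m hm).mul_left R)
      _ = y j m + R * ∑' x : ℕ, ((x:ℝ)/((m:ℝ)^2 + m*x)) * P x := by
          rw [tsum_mul_left, tsum_mul_left, hP1, mul_one]
  -- monotonicity of the tail sum in m
  have hT : ∑' x : ℕ, ((x:ℝ)/(((nk+x':ℕ):ℝ)^2 + ((nk+x':ℕ):ℝ) * x)) * P x
      ≤ ∑' x : ℕ, ((x:ℝ)/((nk:ℝ)^2 + (nk:ℝ) * x)) * P x := by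
    refine Summable.tsum_le_tsum ?_ (hsum _ hn') (hsum _ hnk)
    intro x
    have h1 : (0:ℝ) < (nk:ℝ)^2 + (nk:ℝ) * x := by
      have : (0:ℝ) < (nk:ℝ) := by exact_mod_cast hnk
      positivity
    have h2 : (nk:ℝ)^2 + (nk:ℝ) * x ≤ ((nk+x':ℕ):ℝ)^2 + ((nk+x':ℕ):ℝ) * x := by
      push_cast
      nlinarith [Nat.cast_nonneg (α := ℝ) x', Nat.cast_nonneg (α := ℝ) nk,
        Nat.cast_nonneg (α := ℝ) x]
    exact mul_le_mul_of_nonneg_right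
      (div_le_div_of_nonneg_left (Nat.cast_nonneg x) h1 h2) (hP x)
  have hTnn : 0 ≤ ∑' x : ℕ, ((x:ℝ)/(((nk+x':ℕ):ℝ)^2 + ((nk+x':ℕ):ℝ) * x)) * P x := by
    refine tsum_nonneg fun x => mul_nonneg ?_ (hP x)
    have : (0:ℝ) < ((nk+x':ℕ):ℝ) := by exact_mod_cast hn'
    positivity
  -- from hstop: R * T nk ≤ c
  have hdiff : ∀ j m, y j m - y (j+1) m = c := by
    intro j m
    rw [hy, hy]
    push_cast
    ring
  have hstop' : R * ∑' x : ℕ, ((x:ℝ)/((nk:ℝ)^2 + (nk:ℝ) * x)) * P x ≤ c := by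
    have := key (k+1) nk hnk
    have hd := hdiff k nk
    linarith [hstop.le, this ▸ hstop]
  rw [key (k+2) (nk+x') hn']
  have hd := hdiff (k+1) (nk+x')
  have : R * ∑' x : ℕ, ((x:ℝ)/(((nk+x':ℕ):ℝ)^2 + ((nk+x':ℕ):ℝ) * x)) * P x ≤ c := by
    calc R * _ ≤ R * ∑' x : ℕ, ((x:ℝ)/((nk:ℝ)^2 + (nk:ℝ) * x)) * P x := by
            exact mul_le_mul_of_nonneg_left hT hR.le
      _ ≤ c := hstop'
  linarith
end
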